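/- Let C_n be a cycle of odd length n > 3 with edge ideal I. Then the minimal generators of I^{[(n-1)/2 - 1]} are exactly the monomials (x_1...x_n)/(x_r x_s x_t) with r < s < t and both s - r and t - s odd. Equivalently, {r,s,t} is the complement of the vertex set of a matching of size (n-3)/2 in C_n iff s - r and t - s are odd. -/

import Mathlib

open MvPolynomial

noncomputable section

abbrev SRing (K : Type) [Field K] (n : ℕ) := MvPolynomial (Fin n) K

/-- total degree of an exponent vector -/
def mdeg {n : ℕ} (e : Fin n →₀ ℕ) : ℕ := e.sum fun _ v => v

/-- minimal monomial generators of a monomial ideal, as exponent vectors: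
monomials in `J` none of whose proper divisors lies in `J` -/
def minGen {K : Type} [Field K] {n : ℕ} (J : Ideal (SRing K n)) : Set (Fin n →₀ ℕ) :=
  {e | (monomial e (1:K)) ∈ J ∧
    ∀ e' : Fin n →₀ ℕ, e' ≤ e → e' ≠ e → (monomial e' (1:K)) ∉ J}

/-- adjacency in the graph `G_J^{(u,v)}` : vertices are the minimal generators of `J`
dividing `lcm(u,v)`, with an edge between two of them iff their lcm has degree `d+1` -/
def lcmGraphAdj {K : Type} [Field K] {n : ℕ} (J : Ideal (SRing K n)) (d : ℕ)
    (u v : Fin n →₀ ℕ) (w w' : Fin n →₀ ℕ) : Prop :=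
  w ∈ minGen J ∧ w' ∈ minGen J ∧ w ≤ u ⊔ v ∧ w' ≤ u ⊔ v ∧ mdeg (w ⊔ w') = d + 1

/-- a graded partial free resolution of the ideal `I`, exact at homological positions `< r`:
`F_i` is free with basis in (internal) degrees `dg i`, the maps are graded of degree `0`,
`F_0` surjects onto `I`, and the sequence is exact at `F_i` for `i < r`. -/
structure GradedPartialRes {K : Type} [Field K] {n : ℕ} (I : Ideal (SRing K n)) (r : ℕ∞) where
  s : ℕ → ℕ
  dg : ∀ i, Fin (s i) → ℕ
  aug : (Fin (s 0) →₀ SRing K n) →ₗ[SRing K n] SRing K n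
  diff : ∀ i, (Fin (s (i+1)) →₀ SRing K n) →ₗ[SRing K n] (Fin (s i) →₀ SRing K n)
  aug_hom : ∀ k, (aug (Finsupp.single k 1)).IsHomogeneous (dg 0 k)
  diff_hom : ∀ i k l, (diff i (Finsupp.single k 1)) l = 0 ∨
      ∃ m, ((diff i (Finsupp.single k 1)) l).IsHomogeneous m ∧ dg i l + m = dg (i+1) k
  aug_range : LinearMap.range aug = I
  exact_zero : (0 : ℕ∞) < r → LinearMap.range (diff 0) = LinearMap.ker aug
  exact_succ : ∀ i : ℕ, ((i : ℕ∞) + 1) < r →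
      LinearMap.range (diff (i+1)) = LinearMap.ker (diff i)

/-- the graded Betti number `β_{i,j}(I)`: the minimal number of degree-`j` basis elements
in homological position `i`, over all graded partial resolutions of `I` exact at
positions `0, …, i` (the minimum is attained by the minimal graded free resolution). -/
def gradedBetti {K : Type} [Field K] {n : ℕ} (I : Ideal (SRing K n)) (i j : ℕ) : ℕ∞ :=
  ⨅ R : GradedPartialRes I ((i : ℕ∞)+1),
    ((Finset.univ.filter fun k => R.dg i k = j).card : ℕ∞)

/-- `I` (generated in degree `d`) is `r` steps linear: `β_{i,i+j}(I) = 0` for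
all `i ≤ r` and `j > d` -/
def stepsLinear {K : Type} [Field K] {n : ℕ} (I : Ideal (SRing K n)) (d r : ℕ) : Prop :=
  ∀ i ≤ r, ∀ j, d < j → gradedBetti I i (i+j) = 0

/-- `index(I) = sup{r : I is r steps linear} + 1` -/
def idealIndex {K : Type} [Field K] {n : ℕ} (I : Ideal (SRing K n)) (d : ℕ) : ℕ∞ :=
  sSup {x : ℕ∞ | ∃ r : ℕ, x = (r : ℕ∞) + 1 ∧ stepsLinear I d r}

/-- `I` is linearly related: all first syzygies are linear, i.e. `index(I) > 1` -/
def LinearlyRelated {K : Type} [Field K] {n : ℕ} (I : Ideal (SRing K n)) (d : ℕ) : Prop :=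
  stepsLinear I d 1

/-- projective dimension of `I`: the minimal length of a graded free resolution of `I` -/
def projDim {K : Type} [Field K] {n : ℕ} (I : Ideal (SRing K n)) : ℕ∞ :=
  sInf {x : ℕ∞ | ∃ m : ℕ, x = (m : ℕ∞) ∧
    ∃ R : GradedPartialRes I ⊤, ∀ i : ℕ, m < i → R.s i = 0}

/-- the edge ideal of the graph (possibly with loops) given by a symmetric relation `E`:
generated by the monomials `X i * X j` with `E i j` -/
def edgeIdeal (K : Type) [Field K] {n : ℕ} (E : Fin n → Fin n → Prop) : Ideal (SRing K n) :=
  Ideal.span {p | ∃ i j, E i j ∧ p = X i * X j}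

/-- `E` is gap free: for any two disjoint edges there is an edge meeting both -/
def GapFree {n : ℕ} (E : Fin n → Fin n → Prop) : Prop :=
  ∀ i i' j j', E i i' → E j j' → i ≠ j → i ≠ j' → i' ≠ j → i' ≠ j' →
    ∃ a b, E a b ∧ (a = i ∨ a = i') ∧ (b = j ∨ b = j')

/-- a matching of a simple graph, recorded as a finite set of ordered pairs `(i,j)` with
`i < j`: edges of `G` that are pairwise disjoint -/
def IsMatching {n : ℕ} (G : SimpleGraph (Fin n)) (M : Finset (Fin n × Fin n)) : Prop :=
  (∀ p ∈ M, G.Adj p.1 p.2 ∧ p.1 < p.2) ∧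
  ∀ p ∈ M, ∀ q ∈ M, p ≠ q →
    p.1 ≠ q.1 ∧ p.1 ≠ q.2 ∧ p.2 ≠ q.1 ∧ p.2 ≠ q.2

/-- the matching number `ν(G)` -/
def matchNum {n : ℕ} (G : SimpleGraph (Fin n)) : ℕ :=
  sSup {k | ∃ M, IsMatching G M ∧ M.card = k}

/-- the edge `e` meets the edge `f` (as unordered pairs of vertices) -/
def meets {n : ℕ} (e f : Fin n × Fin n) : Prop :=
  e.1 = f.1 ∨ e.1 = f.2 ∨ e.2 = f.1 ∨ e.2 = f.2

/-- two (disjoint) edges form a gap in `G`: no edge of `G` meets both -/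
def FormsGap {n : ℕ} (G : SimpleGraph (Fin n)) (e e' : Fin n × Fin n) : Prop :=
  ¬ ∃ a b, G.Adj a b ∧ meets (a, b) e ∧ meets (a, b) e'

/-- a restricted matching: a matching one of whose edges forms a gap with
every other edge of the matching -/
def IsRestrictedMatching {n : ℕ} (G : SimpleGraph (Fin n)) (M : Finset (Fin n × Fin n)) : Prop :=
  IsMatching G M ∧ ∃ e ∈ M, ∀ e' ∈ M, e' ≠ e → FormsGap G e e'

/-- `ν₀(G)`: maximal size of a restricted matching, set to `1` if there is none -/
def resMatchNum {n : ℕ} (G : SimpleGraph (Fin n)) : ℕ :=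
  max (sSup {k | ∃ M, IsRestrictedMatching G M ∧ M.card = k}) 1

/-- the `k`-th squarefree power `I(G)^{[k]}`: generated by the products of the
edges of the matchings of `G` of size `k` -/
def sqfreePower (K : Type) [Field K] {n : ℕ} (G : SimpleGraph (Fin n)) (k : ℕ) :
    Ideal (SRing K n) :=
  Ideal.span {p | ∃ M : Finset (Fin n × Fin n), IsMatching G M ∧ M.card = k ∧
    p = ∏ q ∈ M, (X q.1 * X q.2)}

/-- a monomial ideal has linear quotients: for some ordering `u_1, …, u_t` of its minimal
monomial generators, each colon ideal `(u_1, …, u_{i-1}) : u_i` is generated by variables -/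
def HasLinearQuotients {K : Type} [Field K] {n : ℕ} (J : Ideal (SRing K n)) : Prop :=
  ∃ (t : ℕ) (u : Fin t → (Fin n →₀ ℕ)), Function.Injective u ∧
    (∀ e, e ∈ minGen J ↔ ∃ i, u i = e) ∧
    ∀ i : Fin t, ∃ V : Set (Fin n),
      Submodule.colon (Ideal.span ((fun j => (monomial (u j) (1:K))) '' {j | j < i}))
        (Ideal.span {monomial (u i) (1:K)}) =
      Ideal.span ((fun v => (X v : SRing K n)) '' V)

/-- the cycle graph of length `n` on `Fin n`: edges `{i, i+1}` and `{0, n-1}` -/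
def cycleG (n : ℕ) : SimpleGraph (Fin n) where
  Adj i j := i ≠ j ∧ ((i:ℕ)+1 = j ∨ (j:ℕ)+1 = i ∨ ((i:ℕ) = 0 ∧ (j:ℕ) = n-1) ∨
    ((j:ℕ) = 0 ∧ (i:ℕ) = n-1))
  symm := by
    constructor
    intro i j h
    exact ⟨h.1.symm, by tauto⟩
  loopless := by constructor; intro i h; exact h.1 rfl

/-! A minimal generator of the squarefree power `I(G)^{[k]}` is the exponent vector of a single
matching of size `k`, because all these vectors have degree `2k`; for a matching it is the
indicator vector of the matched vertices. When `G = C_n`, `n` odd and `k = (n - 3)/2`, a matching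
misses exactly three vertices `r < s < t`. An edge of `C_n` other than `{0, n - 1}` joins
consecutive vertices, so the vertices strictly between `r` and `s` (and between `s` and `t`) are
matched among themselves, and `s - r`, `t - s` are odd. Conversely, consecutive pairs cover each
arc between missed vertices; on the arc through `n - 1, 0` this uses the edge `{0, n - 1}` exactly
when `r` is odd. -/

variable {K : Type} [Field K] {n : ℕ}

def coveredVerts (M : Finset (Fin n × Fin n)) : Finset (Fin n) :=
  M.biUnion fun q => {q.1, q.2}

def matchingExponent (M : Finset (Fin n × Fin n)) : Fin n →₀ ℕ :=
  ∑ q ∈ M, (Finsupp.single q.1 1 + Finsupp.single q.2 1)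

lemma mem_coveredVerts_iff {M : Finset (Fin n × Fin n)} {v : Fin n} :
    v ∈ coveredVerts M ↔ ∃ q ∈ M, v = q.1 ∨ v = q.2 := by
  simp [coveredVerts]

lemma coveredVerts_union (M M' : Finset (Fin n × Fin n)) :
    coveredVerts (M ∪ M') = coveredVerts M ∪ coveredVerts M' :=
  Finset.union_biUnion

lemma coveredVerts_singleton (a b : Fin n) : coveredVerts {(a, b)} = {a, b} :=
  Finset.singleton_biUnion

lemma isMatching_singleton {G : SimpleGraph (Fin n)} {a b : Fin n} (h : G.Adj a b)
    (hab : a < b) : IsMatching G {(a, b)} :=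
  ⟨by simpa using ⟨h, hab⟩, by simp⟩

namespace IsMatching

variable {G : SimpleGraph (Fin n)} {M M' : Finset (Fin n × Fin n)}

lemma mono (hM : IsMatching G M) (h : M' ⊆ M) : IsMatching G M' :=
  ⟨fun p hp => hM.1 p (h hp), fun p hp q hq => hM.2 p (h hp) q (h hq)⟩

lemma union (hM : IsMatching G M) (hM' : IsMatching G M')
    (h : Disjoint (coveredVerts M) (coveredVerts M')) : IsMatching G (M ∪ M') := by
  have hcross : ∀ p ∈ M, ∀ q ∈ M', p.1 ≠ q.1 ∧ p.1 ≠ q.2 ∧ p.2 ≠ q.1 ∧ p.2 ≠ q.2 := by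
    intro p hp q hq
    have hsep : ∀ x y, (x = p.1 ∨ x = p.2) → (y = q.1 ∨ y = q.2) → x ≠ y := by
      rintro x y hx hy rfl
      exact Finset.disjoint_left.mp h (mem_coveredVerts_iff.mpr ⟨p, hp, hx⟩)
        (mem_coveredVerts_iff.mpr ⟨q, hq, hy⟩)
    exact ⟨hsep _ _ (.inl rfl) (.inl rfl), hsep _ _ (.inl rfl) (.inr rfl),
      hsep _ _ (.inr rfl) (.inl rfl), hsep _ _ (.inr rfl) (.inr rfl)⟩
  refine ⟨fun p hp => (Finset.mem_union.mp hp).elim (hM.1 p) (hM'.1 p), ?_⟩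
  intro p hp q hq hpq
  rcases Finset.mem_union.mp hp with hp | hp <;> rcases Finset.mem_union.mp hq with hq | hq
  · exact hM.2 p hp q hq hpq
  · exact hcross p hp q hq
  · obtain ⟨h1, h2, h3, h4⟩ := hcross q hq p hp
    exact ⟨h1.symm, h3.symm, h2.symm, h4.symm⟩
  · exact hM'.2 p hp q hq hpq

lemma pairwiseDisjoint (hM : IsMatching G M) :
    (M : Set (Fin n × Fin n)).PairwiseDisjoint fun q => ({q.1, q.2} : Finset (Fin n)) := by
  intro p hp q hq hpq
  obtain ⟨h11, h12, h21, h22⟩ := hM.2 p hp q hq hpq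
  simp [Finset.disjoint_left, *]

lemma card_coveredVerts (hM : IsMatching G M) : (coveredVerts M).card = 2 * M.card := by
  rw [coveredVerts, Finset.card_biUnion hM.pairwiseDisjoint, Finset.sum_congr rfl
    fun q hq => Finset.card_pair (hM.1 q hq).2.ne, Finset.sum_const, smul_eq_mul, mul_comm]

lemma matchingExponent_apply (hM : IsMatching G M) (x : Fin n) :
    matchingExponent M x = if x ∈ coveredVerts M then 1 else 0 := by
  classical
  have : matchingExponent M = ∑ v ∈ coveredVerts M, Finsupp.single v 1 := by
    rw [coveredVerts, Finset.sum_biUnion hM.pairwiseDisjoint, matchingExponent]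
    exact Finset.sum_congr rfl fun q hq => by rw [Finset.sum_pair (hM.1 q hq).2.ne]
  rw [this, Finsupp.finsetSum_apply]
  simp [Finsupp.single_apply]

lemma matchingExponent_apply_of_coveredVerts_eq_compl (hM : IsMatching G M) {T : Finset (Fin n)}
    (h : coveredVerts M = Tᶜ) (x : Fin n) : matchingExponent M x = if x ∈ T then 0 else 1 := by
  by_cases hx : x ∈ T <;> simp [hM.matchingExponent_apply, h, hx]

lemma coveredVerts_subset_of_matchingExponent_le (hM : IsMatching G M)
    (hM' : IsMatching G M') (h : matchingExponent M' ≤ matchingExponent M) :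
    coveredVerts M' ⊆ coveredVerts M := by
  intro x hx
  have := h x
  rw [hM.matchingExponent_apply, hM'.matchingExponent_apply, if_pos hx] at this
  by_contra hxM
  simp [hxM] at this

lemma matchingExponent_eq_of_le (hM : IsMatching G M) (hM' : IsMatching G M')
    (hcard : M'.card = M.card) (h : matchingExponent M' ≤ matchingExponent M) :
    matchingExponent M' = matchingExponent M := by
  have hcov : coveredVerts M' = coveredVerts M :=
    Finset.eq_of_subset_of_card_le (hM.coveredVerts_subset_of_matchingExponent_le hM' h)
      (by rw [hM.card_coveredVerts, hM'.card_coveredVerts, hcard])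
  ext x
  rw [hM.matchingExponent_apply, hM'.matchingExponent_apply, hcov]

lemma even_card_of_subset_coveredVerts (hM : IsMatching G M) {S : Finset (Fin n)}
    (hS : S ⊆ coveredVerts M) (hclosed : ∀ q ∈ M, q.1 ∈ S ↔ q.2 ∈ S) : Even S.card := by
  classical
  have hSM : S = coveredVerts (M.filter fun q => q.1 ∈ S) := by
    ext v
    simp only [coveredVerts, Finset.mem_biUnion, Finset.mem_filter, Finset.mem_insert,
      Finset.mem_singleton]
    constructor
    · intro hv
      obtain ⟨q, hq, hvq⟩ := mem_coveredVerts_iff.mp (hS hv)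
      rcases hvq with rfl | rfl
      · exact ⟨q, ⟨hq, hv⟩, Or.inl rfl⟩
      · exact ⟨q, ⟨hq, (hclosed q hq).2 hv⟩, Or.inr rfl⟩
    · rintro ⟨q, ⟨hq, hq1⟩, rfl | rfl⟩
      exacts [hq1, (hclosed q hq).1 hq1]
  rw [hSM, (hM.mono (Finset.filter_subset _ M)).card_coveredVerts]
  exact even_two_mul _

end IsMatching

lemma prod_X_mul_X_eq_monomial (M : Finset (Fin n × Fin n)) :
    ∏ q ∈ M, (X q.1 * X q.2 : SRing K n) = monomial (matchingExponent M) 1 := by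
  simp only [matchingExponent, monomial_sum_one, X, monomial_mul, one_mul]

lemma monomial_mem_sqfreePower_iff {G : SimpleGraph (Fin n)} {k : ℕ} {e : Fin n →₀ ℕ} :
    monomial e (1 : K) ∈ sqfreePower K G k ↔
      ∃ M, IsMatching G M ∧ M.card = k ∧ matchingExponent M ≤ e := by
  have hgens : {p : SRing K n | ∃ M, IsMatching G M ∧ M.card = k ∧
      p = ∏ q ∈ M, (X q.1 * X q.2)} =
      (fun d => monomial d (1 : K)) ''
        {d | ∃ M, IsMatching G M ∧ M.card = k ∧ matchingExponent M = d} := by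
    ext p
    simp only [prod_X_mul_X_eq_monomial, Set.mem_ofPred_eq, Set.mem_image]
    grind
  classical
  rw [sqfreePower, hgens, mem_ideal_span_monomial_image, support_monomial, if_neg one_ne_zero]
  simp [and_assoc]

lemma mem_minGen_sqfreePower_iff {G : SimpleGraph (Fin n)} {k : ℕ} {e : Fin n →₀ ℕ} :
    e ∈ minGen (sqfreePower K G k) ↔
      ∃ M, IsMatching G M ∧ M.card = k ∧ matchingExponent M = e := by
  constructor
  · rintro ⟨he, hmin⟩
    obtain ⟨M, hM, hcard, hle⟩ := monomial_mem_sqfreePower_iff.mp he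
    refine ⟨M, hM, hcard, by_contra fun hne => hmin _ hle hne ?_⟩
    exact monomial_mem_sqfreePower_iff.mpr ⟨M, hM, hcard, le_rfl⟩
  · rintro ⟨M, hM, hcard, rfl⟩
    refine ⟨monomial_mem_sqfreePower_iff.mpr ⟨M, hM, hcard, le_rfl⟩, fun e' hle hne he' => ?_⟩
    obtain ⟨M', hM', hcard', hle'⟩ := monomial_mem_sqfreePower_iff.mp he'
    have := hM.matchingExponent_eq_of_le hM' (hcard'.trans hcard.symm) (hle'.trans hle)
    exact hne (le_antisymm hle (this ▸ hle'))

lemma Finset.exists_lt_lt_eq_of_card_eq_three {α : Type*} [LinearOrder α] {T : Finset α}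
    (h : T.card = 3) : ∃ a b c, a < b ∧ b < c ∧ T = {a, b, c} := by
  let f := T.orderEmbOfFin h
  refine ⟨f 0, f 1, f 2, f.strictMono (by decide), f.strictMono (by decide), ?_⟩
  rw [← Finset.coe_inj, ← Finset.range_orderEmbOfFin T h]
  ext x
  simp only [Set.mem_range, Fin.exists_fin_succ, Finset.coe_insert, Finset.coe_singleton,
    Set.mem_insert_iff, Set.mem_singleton_iff, IsEmpty.exists_iff, or_false]
  simp [eq_comm, f]

lemma cycleG_adj_of_lt {i j : Fin n} (h : (cycleG n).Adj i j) (hij : i < j) :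
    (j : ℕ) = i + 1 ∨ ((i : ℕ) = 0 ∧ (j : ℕ) = n - 1) := by
  obtain ⟨-, h⟩ := h
  omega

lemma IsMatching.odd_sub_of_cycleG {M : Finset (Fin n × Fin n)} (hM : IsMatching (cycleG n) M)
    {a b : Fin n} (hab : a < b) (ha : a ∉ coveredVerts M) (hb : b ∉ coveredVerts M)
    (hmid : ∀ v, a < v → v < b → v ∈ coveredVerts M) : Odd ((b : ℕ) - a) := by
  have hclosed : ∀ q ∈ M, q.1 ∈ Finset.Ioo a b ↔ q.2 ∈ Finset.Ioo a b := by
    intro q hq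
    have h1 : q.1 ≠ a := fun h => ha (h ▸ mem_coveredVerts_iff.mpr ⟨q, hq, Or.inl rfl⟩)
    have h2 : q.2 ≠ b := fun h => hb (h ▸ mem_coveredVerts_iff.mpr ⟨q, hq, Or.inr rfl⟩)
    have := cycleG_adj_of_lt (hM.1 q hq).1 (hM.1 q hq).2
    simp only [Finset.mem_Ioo]
    omega
  have := hM.even_card_of_subset_coveredVerts
    (fun v hv => hmid v (Finset.mem_Ioo.mp hv).1 (Finset.mem_Ioo.mp hv).2) hclosed
  rw [Fin.card_Ioo, Nat.even_iff] at this
  rw [Nat.odd_iff]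
  omega

lemma IsMatching.exists_odd_sub_of_card_compl_coveredVerts_eq_three
    {M : Finset (Fin n × Fin n)} (hM : IsMatching (cycleG n) M)
    (h3 : (coveredVerts M)ᶜ.card = 3) :
    ∃ r s t : Fin n, r < s ∧ s < t ∧ Odd ((s : ℕ) - r) ∧ Odd ((t : ℕ) - s) ∧
      coveredVerts M = {r, s, t}ᶜ := by
  obtain ⟨r, s, t, hrs, hst, hrst⟩ := Finset.exists_lt_lt_eq_of_card_eq_three h3
  have hcov : coveredVerts M = {r, s, t}ᶜ := by rw [← hrst, compl_compl]
  have hmem (v : Fin n) : v ∈ coveredVerts M ↔ ¬(v = r ∨ v = s ∨ v = t) := by simp [hcov]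
  refine ⟨r, s, t, hrs, hst, hM.odd_sub_of_cycleG hrs ?_ ?_ ?_,
    hM.odd_sub_of_cycleG hst ?_ ?_ ?_, hcov⟩
  all_goals first
    | (rw [hmem]; omega)
    | (intro v hv1 hv2; rw [hmem]; omega)

def pathMatching (n a b : ℕ) : Finset (Fin n × Fin n) :=
  Finset.univ.filter fun q => a ≤ (q.1 : ℕ) ∧ (q.2 : ℕ) < b ∧ (q.2 : ℕ) = q.1 + 1 ∧
    Even ((q.1 : ℕ) - a)

lemma isMatching_pathMatching (a b : ℕ) : IsMatching (cycleG n) (pathMatching n a b) := by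
  simp only [IsMatching, pathMatching, Finset.mem_filter, Finset.mem_univ, true_and,
    Nat.even_iff, cycleG, ne_eq, Fin.ext_iff, Prod.ext_iff, Fin.lt_def]
  constructor
  · intro p hp
    omega
  · intro p hp q hq hpq
    omega

lemma mem_coveredVerts_pathMatching {a b : ℕ} (hb : b ≤ n) (hab : Even (b - a)) {v : Fin n} :
    v ∈ coveredVerts (pathMatching n a b) ↔ a ≤ (v : ℕ) ∧ (v : ℕ) < b := by
  rw [Nat.even_iff] at hab
  simp only [mem_coveredVerts_iff, pathMatching, Finset.mem_filter, Finset.mem_univ, true_and,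
    Nat.even_iff, Prod.exists]
  constructor
  · rintro ⟨x, y, hxy, rfl | rfl⟩ <;> omega
  · rintro ⟨hav, hvb⟩
    by_cases hv : ((v : ℕ) - a) % 2 = 0
    · exact ⟨v, Fin.mk (v + 1) (by omega), ⟨hav, by simp only; omega, rfl, hv⟩, Or.inl rfl⟩
    · exact ⟨Fin.mk (v - 1) (by omega), v, ⟨by simp only; omega, hvb, by simp only; omega,
        by simp only; omega⟩, Or.inr rfl⟩

lemma exists_isMatching_cycleG_coveredVerts_outside {r t : ℕ} (hrt : r ≤ t) (ht : t < n)
    (heven : Even (r + (n - 1 - t))) :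
    ∃ M, IsMatching (cycleG n) M ∧ ∀ v : Fin n, v ∈ coveredVerts M ↔ (v : ℕ) < r ∨ t < v := by
  rw [Nat.even_iff] at heven
  by_cases hr : r % 2 = 0
  · have hlow (v : Fin n) : v ∈ coveredVerts (pathMatching n 0 r) ↔ (v : ℕ) < r := by
      rw [mem_coveredVerts_pathMatching (by omega) (Nat.even_iff.2 (by omega))]
      omega
    have hhigh (v : Fin n) : v ∈ coveredVerts (pathMatching n (t + 1) n) ↔ t < v := by
      rw [mem_coveredVerts_pathMatching le_rfl (Nat.even_iff.2 (by omega))]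
      omega
    refine ⟨_, (isMatching_pathMatching 0 r).union (isMatching_pathMatching (t + 1) n) ?_, ?_⟩
    · exact Finset.disjoint_left.2 fun v h1 h2 => by rw [hlow] at h1; rw [hhigh] at h2; omega
    · intro v
      rw [coveredVerts_union, Finset.mem_union, hlow, hhigh]
  · let first : Fin n := ⟨0, by omega⟩
    let last : Fin n := ⟨n - 1, by omega⟩
    have hwrap : (cycleG n).Adj first last :=
      ⟨Fin.ne_of_val_ne (by simp [first, last]; omega), Or.inr (Or.inr (Or.inl ⟨rfl, rfl⟩))⟩
    have hends (v : Fin n) :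
        v ∈ coveredVerts {(first, last)} ↔ (v : ℕ) = 0 ∨ (v : ℕ) = n - 1 := by
      simp [coveredVerts_singleton, Fin.ext_iff, first, last]
    have hlow (v : Fin n) :
        v ∈ coveredVerts (pathMatching n 1 r) ↔ 0 < (v : ℕ) ∧ (v : ℕ) < r := by
      rw [mem_coveredVerts_pathMatching (by omega) (Nat.even_iff.2 (by omega))]
      omega
    have hhigh (v : Fin n) :
        v ∈ coveredVerts (pathMatching n (t + 1) (n - 1)) ↔ t < v ∧ (v : ℕ) < n - 1 := by
      rw [mem_coveredVerts_pathMatching (by omega) (Nat.even_iff.2 (by omega))]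
      omega
    refine ⟨_, ((isMatching_singleton hwrap (Fin.lt_def.2 (by simp [first, last]; omega))).union
      (isMatching_pathMatching 1 r) ?_).union (isMatching_pathMatching (t + 1) (n - 1)) ?_, ?_⟩
    · exact Finset.disjoint_left.2 fun v h1 h2 => by rw [hends] at h1; rw [hlow] at h2; omega
    · refine Finset.disjoint_left.2 fun v h1 h2 => ?_
      rw [coveredVerts_union, Finset.mem_union, hends, hlow] at h1
      rw [hhigh] at h2
      omega
    · intro v
      rw [coveredVerts_union, coveredVerts_union, Finset.mem_union, Finset.mem_union, hends, hlow,
        hhigh]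
      omega

lemma exists_isMatching_cycleG_coveredVerts_eq_compl (hodd : Odd n) {r s t : Fin n}
    (hrs : r < s) (hst : s < t) (hrs_odd : Odd ((s : ℕ) - r)) (hst_odd : Odd ((t : ℕ) - s)) :
    ∃ M, IsMatching (cycleG n) M ∧ coveredVerts M = {r, s, t}ᶜ := by
  rw [Nat.odd_iff] at hodd hrs_odd hst_odd
  obtain ⟨M, hM, hout⟩ := exists_isMatching_cycleG_coveredVerts_outside (n := n) (r := r) (t := t)
    (by omega) t.isLt (Nat.even_iff.2 (by omega))
  have hrs_cov (v : Fin n) : v ∈ coveredVerts (pathMatching n (r + 1) s) ↔ r < v ∧ v < s := by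
    rw [mem_coveredVerts_pathMatching s.isLt.le (Nat.even_iff.2 (by omega))]
    omega
  have hst_cov (v : Fin n) : v ∈ coveredVerts (pathMatching n (s + 1) t) ↔ s < v ∧ v < t := by
    rw [mem_coveredVerts_pathMatching t.isLt.le (Nat.even_iff.2 (by omega))]
    omega
  refine ⟨_, (hM.union (isMatching_pathMatching (r + 1) s) ?_).union
    (isMatching_pathMatching (s + 1) t) ?_, ?_⟩
  · exact Finset.disjoint_left.2 fun v h1 h2 => by rw [hout] at h1; rw [hrs_cov] at h2; omega
  · refine Finset.disjoint_left.2 fun v h1 h2 => ?_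
    rw [coveredVerts_union, Finset.mem_union, hout, hrs_cov] at h1
    rw [hst_cov] at h2
    omega
  · ext v
    rw [coveredVerts_union, coveredVerts_union, Finset.mem_union, Finset.mem_union, hout, hrs_cov,
      hst_cov]
    simp only [Finset.mem_compl, Finset.mem_insert, Finset.mem_singleton]
    omega

/-- **Lemma.** For the odd cycle `C_n` (`n > 3`), the minimal generators of the
squarefree power `I^{[(n-1)/2-1]}` are exactly the monomials
`(x_0 ⋯ x_{n-1})/(x_r x_s x_t)` with `r < s < t` and `s - r`, `t - s` odd. -/
theorem stmt17 (K : Type) [Field K] (n : ℕ) (hn : 3 < n) (hodd : Odd n) :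
    ∀ e : Fin n →₀ ℕ,
      e ∈ minGen (sqfreePower K (cycleG n) ((n - 1) / 2 - 1)) ↔
        ∃ r s t : Fin n, r < s ∧ s < t ∧
          Odd ((s : ℕ) - (r : ℕ)) ∧ Odd ((t : ℕ) - (s : ℕ)) ∧
          ∀ x : Fin n, e x = if x = r ∨ x = s ∨ x = t then 0 else 1 := by
  intro e
  have hk : 2 * ((n - 1) / 2 - 1) = n - 3 := by
    rw [Nat.odd_iff] at hodd
    omega
  rw [mem_minGen_sqfreePower_iff]
  constructor
  · rintro ⟨M, hM, hcard, rfl⟩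
    obtain ⟨r, s, t, hrs, hst, hrs_odd, hst_odd, hcov⟩ :=
      hM.exists_odd_sub_of_card_compl_coveredVerts_eq_three (by
        rw [Finset.card_compl, hM.card_coveredVerts, hcard, hk, Fintype.card_fin]
        omega)
    exact ⟨r, s, t, hrs, hst, hrs_odd, hst_odd,
      fun x => by simp [hM.matchingExponent_apply_of_coveredVerts_eq_compl hcov]⟩
  · rintro ⟨r, s, t, hrs, hst, hrs_odd, hst_odd, he⟩
    obtain ⟨M, hM, hcov⟩ :=
      exists_isMatching_cycleG_coveredVerts_eq_compl hodd hrs hst hrs_odd hst_odd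
    have hcard : 2 * M.card = n - 3 := by
      rw [← hM.card_coveredVerts, hcov, Finset.card_compl, Fintype.card_fin,
        Finset.card_eq_three.2 ⟨r, s, t, hrs.ne, (hrs.trans hst).ne, hst.ne, rfl⟩]
    refine ⟨M, hM, by omega, Finsupp.ext fun x => ?_⟩
    simp [hM.matchingExponent_apply_of_coveredVerts_eq_compl hcov, he]

end
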